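/- In a DAG where Y has no descendants, T ∈ PA(Y), and all other variables are non-descendants of T and Y: in the mutilated graph obtained by deleting all edges out of T, every path from T to Y is blocked by PA(Y)\{T}; i.e., PA(Y)\{T} d-separates T and Y in G with T's outgoing edges removed. -/

import Mathlib

/-- `v` is a collider on a path segment `u - v - w`: both edges point into `v`. -/
def Collider {V : Type*} (E : V → V → Prop) (u v w : V) : Prop := E u v ∧ E w v

/-- The triple `u - v - w` blocks a path with respect to the conditioning set `S`. -/
def BlockedTriple {V : Type*} (E : V → V → Prop) (S : Set V) (u v w : V) : Prop :=
  (¬ Collider E u v w ∧ v ∈ S) ∨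
  (Collider E u v w ∧ v ∉ S ∧ ∀ d, Relation.TransGen E v d → d ∉ S)

/-- An (undirected) path in the directed graph `E` from `a` to `b`. -/
def AdjPath {V : Type*} (E : V → V → Prop) (p : List V) (a b : V) : Prop :=
  List.Chain' (fun x y => E x y ∨ E y x) p ∧ p.head? = some a ∧
    p.getLast? = some b ∧ p.Nodup ∧ 2 ≤ p.length

/-- A path is blocked by `S` if some consecutive triple on it is blocked. -/
def Blocked {V : Type*} (E : V → V → Prop) (S : Set V) (p : List V) : Prop :=
  ∃ u v w, List.IsInfix [u, v, w] p ∧ BlockedTriple E S u v w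

/-- `S` d-separates `a` and `b`: every path between them is blocked by `S`. -/
def DSep {V : Type*} (E : V → V → Prop) (S : Set V) (a b : V) : Prop :=
  ∀ p, AdjPath E p a b → Blocked E S p

/-- A directed graph is acyclic (a DAG). -/
def IsAcyclic {V : Type*} (E : V → V → Prop) : Prop := ∀ v, ¬ Relation.TransGen E v v

/-! Once the edges out of `T` are deleted, the only neighbours of the sink `Y` are its parents
other than `T`. So a path from `T` to `Y` cannot be a single edge, and the vertex before `Y` is
such a parent; as `Y` has no children, that vertex is not a collider, so the path is blocked there. -/

section Sink

variable {V : Type*} {E : V → V → Prop}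

theorem blockedTriple_parent_of_sink {b : V} (hsink : ∀ c, ¬ E b c) {u w : V} (hub : E u b) :
    BlockedTriple E {x | E x b} w u b :=
  Or.inl ⟨fun hcoll => hsink u hcoll.2, hub⟩

theorem dsep_parents_of_sink {a b : V} (hsink : ∀ c, ¬ E b c) (hab : ¬ E a b) :
    DSep E {x | E x b} a b := by
  rintro p ⟨hchain, hhead, hlast, -, hlen⟩
  replace hchain : p.IsChain (fun x y => E x y ∨ E y x) := hchain
  obtain ⟨q, rfl⟩ : ∃ q : List V, p = q.reverse := ⟨p.reverse, p.reverse_reverse.symm⟩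
  rw [List.head?_reverse] at hhead
  rw [List.getLast?_reverse] at hlast
  rw [List.length_reverse] at hlen
  match q, hhead, hlast, hlen with
  | [y, x], hhead, hlast, _ =>
    obtain ⟨rfl, rfl⟩ : x = a ∧ y = b := by simpa using And.intro hhead hlast
    have hadj : E x y ∨ E y x := by simpa using hchain
    exact (hadj.elim hab (hsink x)).elim
  | y :: u :: w :: s, _, hlast, _ =>
    obtain rfl : y = b := by simpa using hlast
    have hinfix : [w, u, y] <:+: (y :: u :: w :: s).reverse := ⟨s.reverse, [], by simp⟩
    have hub : E u y ∨ E y u := by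
      simpa using (hchain.infix hinfix).tail
    exact ⟨w, u, y, hinfix, blockedTriple_parent_of_sink hsink (hub.resolve_right (hsink u))⟩

end Sink

theorem dsep_in_outgoing_mutilated_graph_general {V : Type*} (E : V → V → Prop)
    (T Y : V)
    (hnochild : ∀ c, ¬ E Y c) :
    DSep (fun x y => E x y ∧ x ≠ T) ({x | E x Y} \ {T}) T Y :=
  dsep_parents_of_sink (fun c h => hnochild c h.1) (fun h => h.2 rfl)

/-- in a DAG where `Y` has no descendants, `T ∈ PA(Y)` and all
other variables are non-descendants of `T` and `Y`, the set `PA(Y) \ {T}`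
d-separates `T` and `Y` in the mutilated graph obtained by deleting all edges
going out of `T`. -/
theorem dsep_in_outgoing_mutilated_graph {V : Type*} (E : V → V → Prop)
    (hacyc : IsAcyclic E) (T Y : V) (hTY : E T Y)
    (hnochild : ∀ c, ¬ E Y c)
    (hpre : ∀ v, v ≠ T → v ≠ Y →
      ¬ Relation.TransGen E T v ∧ ¬ Relation.TransGen E Y v) :
    DSep (fun x y => E x y ∧ x ≠ T) ({x | E x Y} \ {T}) T Y :=
  dsep_in_outgoing_mutilated_graph_general E T Y hnochild
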